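/- arXiv:1108.3253 — 3 statements merged into one kernel-verified Lean document; each statement's English description precedes it below -/
import Mathlib

section
/- If B is first countable and p : E → B is an arc-covering with E a Peano space (connected and locally path-connected), then p satisfies: for every e₀ ∈ E and open U ∋ e₀ there is a neighborhood V of p(e₀) in B whose path component of p⁻¹(V) at e₀ lies in U (i.e., p is an arc-hedgehog covering). -/
open unitInterval Topology

set_option linter.unnecessarySimpa false

universe u v w

/-- `p : E → B` is an arc-covering: unique lifting of paths given the initial point. -/
def IsArcCovering {E : Type*} {B : Type*} [TopologicalSpace E] [TopologicalSpace B]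
    (p : C(E, B)) : Prop :=
  ∀ (e₀ : E) (f : C(I, B)), f 0 = p e₀ →
    ∃! g : C(I, E), p.comp g = f ∧ g 0 = e₀

/-- The relation identifying the wedge points of a wedge of copies of `(A, a₀)` indexed by `S`. -/
def wedgeRel (S A : Type*) (a₀ : A) (x y : S × A) : Prop :=
  x = y ∨ (x.2 = a₀ ∧ y.2 = a₀)

/-- The wedge (one-point union) of copies of `(A, a₀)` indexed by `S`. -/
def Wedge (S A : Type*) (a₀ : A) : Type _ :=
  Quot (wedgeRel S A a₀)

/-- The topology of a directed wedge: a set is open iff its trace on each copy of `A`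
is open, and if it contains the wedge point then it contains all copies of `A`
beyond some index. -/
instance Wedge.instTopologicalSpace (S A : Type*) (a₀ : A) [Preorder S]
    [IsDirected S (· ≤ ·)] [TopologicalSpace A] : TopologicalSpace (Wedge S A a₀) where
  IsOpen U := (∀ s : S, IsOpen {a : A | Quot.mk (wedgeRel S A a₀) (s, a) ∈ U}) ∧
    ((∃ s : S, Quot.mk (wedgeRel S A a₀) (s, a₀) ∈ U) →
      ∃ t : S, ∀ s : S, t < s → ∀ a : A, Quot.mk (wedgeRel S A a₀) (s, a) ∈ U)
  isOpen_univ := by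
    refine ⟨fun s => ?_, fun h => ?_⟩
    · exact isOpen_univ (X := A)
    · obtain ⟨s, -⟩ := h
      exact ⟨s, fun _ _ _ => trivial⟩
  isOpen_inter := by
    rintro U V ⟨hU1, hU2⟩ ⟨hV1, hV2⟩
    refine ⟨fun s => (hU1 s).inter (hV1 s), fun h => ?_⟩
    obtain ⟨tU, htU⟩ := hU2 ⟨h.choose, h.choose_spec.1⟩
    obtain ⟨tV, htV⟩ := hV2 ⟨h.choose, h.choose_spec.2⟩
    obtain ⟨t, ht1, ht2⟩ := directed_of (· ≤ ·) tU tV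
    exact ⟨t, fun s hs a => ⟨htU s (lt_of_le_of_lt ht1 hs) a, htV s (lt_of_le_of_lt ht2 hs) a⟩⟩
  isOpen_sUnion := by
    intro C hC
    constructor
    · intro s
      have : {a : A | Quot.mk (wedgeRel S A a₀) (s, a) ∈ ⋃₀ C} =
          ⋃ U ∈ C, {a : A | Quot.mk (wedgeRel S A a₀) (s, a) ∈ U} := by
        ext a
        simp only [Set.mem_setOf_eq, Set.mem_sUnion, Set.mem_iUnion, exists_prop]
        exact Iff.rfl
      rw [this]
      exact isOpen_biUnion fun U hU => (hC U hU).1 s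
    · rintro ⟨s, hs⟩
      obtain ⟨U, hUC, hsU⟩ := hs
      obtain ⟨t, ht⟩ := (hC U hUC).2 ⟨s, hsU⟩
      exact ⟨t, fun s' hs' a => ⟨U, hUC, ht s' hs' a⟩⟩

/-- An arc-hedgehog over a directed set `S`: the directed wedge of copies of `([0,1], 0)`. -/
def ArcHedgehog (S : Type*) : Type _ := Wedge S I 0

instance (S : Type*) [Preorder S] [IsDirected S (· ≤ ·)] : TopologicalSpace (ArcHedgehog S) :=
  Wedge.instTopologicalSpace S I 0

/-- `p` is an arc-hedgehog covering: maps from arc-hedgehogs lift uniquely. -/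
def IsArcHedgehogCovering {E : Type*} {B : Type*} [TopologicalSpace E] [TopologicalSpace B]
    (p : C(E, B)) : Prop :=
  ∀ (S : Type u) [Preorder S] [IsDirected S (· ≤ ·)],
    ∀ (e₀ : E) (f : C(ArcHedgehog S, B)) (z₀ : ArcHedgehog S), f z₀ = p e₀ →
      ∃! g : C(ArcHedgehog S, E), p.comp g = f ∧ g z₀ = e₀

/-- The closed unit `2`-disk. -/
noncomputable def Disk : Type := Metric.closedBall (0 : EuclideanSpace ℝ (Fin 2)) 1

noncomputable instance : TopologicalSpace Disk := by unfold Disk; infer_instance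

/-- The center of the disk. -/
noncomputable def Disk.center : Disk := ⟨0, by simp⟩

/-- A disk-hedgehog over a directed set `S`: the directed wedge of copies of the pointed disk. -/
def DiskHedgehog (S : Type*) : Type _ := Wedge S Disk Disk.center

noncomputable instance (S : Type*) [Preorder S] [IsDirected S (· ≤ ·)] : TopologicalSpace (DiskHedgehog S) :=
  Wedge.instTopologicalSpace S Disk Disk.center

/-- `p` is a disk-hedgehog covering: maps from disk-hedgehogs lift uniquely. -/
def IsDiskHedgehogCovering {E : Type*} {B : Type*} [TopologicalSpace E] [TopologicalSpace B]
    (p : C(E, B)) : Prop :=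
  ∀ (S : Type u) [Preorder S] [IsDirected S (· ≤ ·)],
    ∀ (e₀ : E) (f : C(DiskHedgehog S, B)) (z₀ : DiskHedgehog S), f z₀ = p e₀ →
      ∃! g : C(DiskHedgehog S, E), p.comp g = f ∧ g z₀ = e₀

/-- `p` is a disk-covering: maps from the closed `2`-disk lift uniquely. -/
def IsDiskCovering {E : Type*} {B : Type*} [TopologicalSpace E] [TopologicalSpace B]
    (p : C(E, B)) : Prop :=
  ∀ (e₀ : E) (f : C(Disk, B)) (d₀ : Disk), f d₀ = p e₀ →
    ∃! g : C(Disk, E), p.comp g = f ∧ g d₀ = e₀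

/-- Path components of preimages of neighborhoods form a neighborhood basis of the
total space. -/
def HedgehogBasisCondition {E : Type*} {B : Type*} [TopologicalSpace E] [TopologicalSpace B]
    (p : C(E, B)) : Prop :=
  ∀ (e₀ : E) (U : Set E), IsOpen U → e₀ ∈ U →
    ∃ V ∈ 𝓝 (p e₀), {y : E | JoinedIn (p ⁻¹' V) e₀ y} ⊆ U

/-- The monodromy relation on loops at `b₀`: two loops are identified iff any two of
their lifts starting at the same point end at the same point. -/
def MonodromyRel {E : Type*} {B : Type*} [TopologicalSpace E] [TopologicalSpace B]
    (p : C(E, B)) (b₀ : B) (α β : Path b₀ b₀) : Prop :=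
  ∀ g h : C(I, E), (∀ t, p (g t) = α t) → (∀ t, p (h t) = β t) →
    g 0 = h 0 → g 1 = h 1

/-- `p` is regular: for each loop in `B`, all lifts are loops or all lifts are non-loops. -/
def IsRegularCovering {E : Type*} {B : Type*} [TopologicalSpace E] [TopologicalSpace B]
    (p : C(E, B)) : Prop :=
  ∀ (b : B) (α : Path b b) (g h : C(I, E)),
    (∀ t, p (g t) = α t) → (∀ t, p (h t) = α t) → g 0 = g 1 → h 0 = h 1

/-!
If the theorem failed at `e₀ ∈ U`, then along a countable antitone neighbourhood basis `Vₙ` of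
`p e₀` there would be paths `γₙ` in `p⁻¹ Vₙ` from `e₀` to points outside `U`. The projections of
the loops `γₙ · γₙ⁻¹` shrink to `p e₀`, so they can be traversed one after the other in a single
path of `B`, ending at `p e₀`. By uniqueness of lifts, its lift from `e₀` runs through the loops
`γₙ · γₙ⁻¹` themselves, so these accumulate at the endpoint `e₁` of the lift. Then `e₀ ⤳ e₁` in
the fibre over `p e₀`, and the path `e₀, …, e₀, e₁` lifts the constant path, so `e₁ = e₀`.
Hence the loops eventually lie in `U`, contradicting the choice of `γₙ`.
-/

open Set Filter

namespace unitInterval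

lemma tendsto_inv_one_sub_sub_one :
    Tendsto (fun t : I => (1 - (t : ℝ))⁻¹ - 1) (𝓝[≠] 1) atTop := by
  have h : Tendsto (fun t : I => 1 - (t : ℝ)) (𝓝[≠] 1) (𝓝[>] 0) := by
    refine tendsto_nhdsWithin_iff.2 ⟨?_, eventually_nhdsWithin_of_forall fun t ht => ?_⟩
    · exact ((continuous_const.sub continuous_subtype_val).tendsto' 1 0 (by simp)).mono_left
        nhdsWithin_le_nhds
    · exact sub_pos.2 (lt_of_le_of_ne t.2.2 fun h => ht (Subtype.ext h))
  simpa only [sub_eq_add_neg, Function.comp_def] using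
    tendsto_atTop_add_const_right _ (-1) (tendsto_inv_nhdsGT_zero.comp h)

end unitInterval

namespace Path

variable {X : Type*} [TopologicalSpace X] {x : X}

noncomputable def concatReal (γ : ℕ → Path x x) (u : ℝ) : X :=
  (γ ⌊u⌋₊).extend (u - ⌊u⌋₊)

lemma concatReal_of_nonpos (γ : ℕ → Path x x) {u : ℝ} (hu : u ≤ 0) : concatReal γ u = x := by
  rw [concatReal, Nat.floor_eq_zero.2 (by linarith), Nat.cast_zero, sub_zero,
    extend_of_le_zero _ hu]

lemma concatReal_eqOn_Icc (γ : ℕ → Path x x) (n : ℕ) :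
    EqOn (concatReal γ) (fun u => (γ n).extend (u - n)) (Icc n (n + 1)) := by
  rintro u ⟨hnu, hun⟩
  rcases hun.lt_or_eq with hun | rfl
  · rw [concatReal, Nat.floor_eq_on_Ico n u ⟨hnu, hun⟩]
  · have : ⌊(n : ℝ) + 1⌋₊ = n + 1 := by exact_mod_cast Nat.floor_natCast (n + 1)
    simp [concatReal, this]

lemma concatReal_natCast_add (γ : ℕ → Path x x) (n : ℕ) (s : I) :
    concatReal γ (n + s) = γ n s := by
  rw [concatReal_eqOn_Icc γ n ⟨by simp [s.2.1], by simp [s.2.2]⟩]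
  simp

lemma continuous_concatReal (γ : ℕ → Path x x) : Continuous (concatReal γ) := by
  have hlf : LocallyFinite fun n : ℕ => Icc (n : ℝ) (n + 1) := by
    have := (locallyFinite_Icc_of_tendsto (X := ℝ) (f := fun k : ℤ => (k : ℝ))
      (g := fun k : ℤ => (k : ℝ) + 1) tendsto_intCast_atTop_atTop
      (tendsto_atBot_add_const_right _ _ (tendsto_intCast_atBot_iff.2 tendsto_id))).comp_injective
      Nat.cast_injective
    simpa [Function.comp_def] using this
  refine (hlf.option_elim' (Iic 0)).continuous ?_ ?_ ?_
  · refine eq_univ_of_forall fun u => mem_iUnion.2 ?_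
    rcases le_or_gt u 0 with hu | hu
    · exact ⟨none, hu⟩
    · exact ⟨some ⌊u⌋₊, Nat.floor_le hu.le, (Nat.lt_floor_add_one u).le⟩
  · rintro (_ | n)
    exacts [isClosed_Iic, isClosed_Icc]
  · rintro (_ | n)
    · exact continuousOn_const.congr fun u hu => concatReal_of_nonpos γ hu
    · exact ((γ n).continuous_extend.comp (continuous_id.sub continuous_const)).continuousOn.congr
        (concatReal_eqOn_Icc γ n)

lemma tendsto_concatReal_atTop {γ : ℕ → Path x x}
    (hγ : Tendsto (fun n => range (γ n)) atTop (𝓝 x).smallSets) :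
    Tendsto (concatReal γ) atTop (𝓝 x) :=
  (hγ.comp tendsto_nat_floor_atTop).of_smallSets (.of_forall fun _ => mem_range_self _)

/-- `t ↦ (1 - t)⁻¹ - 1` maps `[1 - 1/(n+1), 1 - 1/(n+2)]` onto `[n, n + 1]`, where `γ n` is
traversed. At `t = 1` the junk value `0⁻¹ = 0` gives `concatReal γ (-1) = x`. -/
noncomputable def infiniteConcat (γ : ℕ → Path x x)
    (hγ : Tendsto (fun n => range (γ n)) atTop (𝓝 x).smallSets) : Path x x where
  toFun t := concatReal γ ((1 - (t : ℝ))⁻¹ - 1)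
  continuous_toFun := by
    refine continuous_iff_continuousAt.2 fun t => ?_
    rcases eq_or_ne t 1 with rfl | ht
    · refine continuousWithinAt_compl_self.1 ?_
      simpa [ContinuousWithinAt, concatReal_of_nonpos, Function.comp_def] using
        (tendsto_concatReal_atTop hγ).comp tendsto_inv_one_sub_sub_one
    · have : 1 - (t : ℝ) ≠ 0 := sub_ne_zero.2 fun h => ht (Subtype.ext h.symm)
      exact (continuous_concatReal γ).continuousAt.comp
        (((continuousAt_const.sub continuousAt_subtype_val).inv₀ this).sub continuousAt_const)
  source' := by simp [concatReal_of_nonpos]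
  target' := by simp [concatReal_of_nonpos]

noncomputable def infiniteConcatSegment (n : ℕ) : C(I, I) where
  toFun s := projIcc 0 1 zero_le_one (1 - ((n : ℝ) + s + 1)⁻¹)
  continuous_toFun := by
    refine continuous_projIcc.comp (continuous_const.sub (Continuous.inv₀ (by fun_prop) ?_))
    intro s
    have := s.2.1
    positivity

lemma infiniteConcatSegment_coe (n : ℕ) (s : I) :
    (infiniteConcatSegment n s : ℝ) = 1 - ((n : ℝ) + s + 1)⁻¹ := by
  have : 0 ≤ (n : ℝ) + s := by have := s.2.1; positivity
  have hmem : 1 - ((n : ℝ) + s + 1)⁻¹ ∈ Icc (0 : ℝ) 1 :=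
    ⟨sub_nonneg.2 (inv_le_one_of_one_le₀ (by linarith)), sub_le_self _ (by positivity)⟩
  simp [infiniteConcatSegment, projIcc_of_mem _ hmem]

lemma infiniteConcat_infiniteConcatSegment {γ : ℕ → Path x x}
    (hγ : Tendsto (fun n => range (γ n)) atTop (𝓝 x).smallSets) (n : ℕ) (s : I) :
    infiniteConcat γ hγ (infiniteConcatSegment n s) = γ n s := by
  change concatReal γ _ = _
  rw [infiniteConcatSegment_coe, sub_sub_cancel, inv_inv, add_sub_cancel_right,
    concatReal_natCast_add]

lemma infiniteConcatSegment_zero_zero : infiniteConcatSegment 0 0 = 0 :=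
  Subtype.ext (by simp [infiniteConcatSegment_coe])

lemma infiniteConcatSegment_one (n : ℕ) :
    infiniteConcatSegment n 1 = infiniteConcatSegment (n + 1) 0 :=
  Subtype.ext (by simp [infiniteConcatSegment_coe])

lemma tendsto_range_infiniteConcatSegment :
    Tendsto (fun n => range (infiniteConcatSegment n)) atTop (𝓝 1).smallSets := by
  have hlow : Tendsto (fun n => infiniteConcatSegment n 0) atTop (𝓝 1) := by
    refine tendsto_subtype_rng.2 ?_
    simpa [infiniteConcatSegment_coe] using
      tendsto_const_nhds.sub (tendsto_one_div_add_atTop_nhds_zero_nat (𝕜 := ℝ))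
  refine (hlow.Icc tendsto_const_nhds).smallSets_mono (.of_forall ?_)
  rintro n _ ⟨s, rfl⟩
  refine ⟨?_, le_one _⟩
  change (_ : ℝ) ≤ _
  rw [infiniteConcatSegment_coe, infiniteConcatSegment_coe, Icc.coe_zero, add_zero]
  gcongr
  exact le_add_of_nonneg_right s.2.1

end Path

namespace IsArcCovering

variable {E B : Type*} [TopologicalSpace E] [TopologicalSpace B] {p : C(E, B)}

lemma eq_of_comp_eq (hp : IsArcCovering p) {g h : C(I, E)} (hgh : p.comp g = p.comp h)
    (h0 : g 0 = h 0) : g = h :=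
  (hp (h 0) (p.comp h) rfl).unique ⟨hgh, h0⟩ ⟨rfl, rfl⟩

lemma eq_of_specializes (hp : IsArcCovering p) {e e' : E} (h : e ⤳ e') (hpe : p e = p e') :
    e = e' := by
  obtain ⟨γ, hγ⟩ := h.joinedIn (F := p ⁻¹' {p e}) rfl hpe.symm
  have hγ_const : γ.toContinuousMap = ContinuousMap.const I e :=
    hp.eq_of_comp_eq (ContinuousMap.ext fun t => hγ t) γ.source
  simpa using (DFunLike.congr_fun hγ_const 1).symm

theorem tendsto_smallSets_range {e : E} {β : ℕ → Path e e} (hp : IsArcCovering p)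
    (h : Tendsto (fun n => p '' range (β n)) atTop (𝓝 (p e)).smallSets) :
    Tendsto (fun n => range (β n)) atTop (𝓝 e).smallSets := by
  let α n : Path (p e) (p e) := (β n).map p.continuous
  have hα : Tendsto (fun n => range (α n)) atTop (𝓝 (p e)).smallSets := by
    simpa only [α, Path.map_coe, range_comp] using h
  obtain ⟨g, ⟨hpg, hg0⟩, -⟩ := hp e (Path.infiniteConcat α hα) (Path.source _)
  have hpiece : ∀ n, g (Path.infiniteConcatSegment n 0) = e →
      g.comp (Path.infiniteConcatSegment n) = (β n).toContinuousMap := fun n hn =>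
    hp.eq_of_comp_eq (ContinuousMap.ext fun s => by
      simpa [Path.infiniteConcat_infiniteConcatSegment, α] using
        DFunLike.congr_fun hpg (Path.infiniteConcatSegment n s)) (hn.trans (β n).source.symm)
  have hstart : ∀ n, g (Path.infiniteConcatSegment n 0) = e := by
    intro n
    induction n with
    | zero => rwa [Path.infiniteConcatSegment_zero_zero]
    | succ n ih =>
      simpa [← Path.infiniteConcatSegment_one] using DFunLike.congr_fun (hpiece n ih) 1
  have hrange : ∀ n, range (β n) = g '' range (Path.infiniteConcatSegment n) := fun n => by
    rw [← range_comp, ← ContinuousMap.coe_comp, hpiece n (hstart n)]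
    rfl
  have hlim : Tendsto (fun n => range (β n)) atTop (𝓝 (g 1)).smallSets := by
    simpa only [hrange, Function.comp_def] using
      ((g.continuous.tendsto 1).image_smallSets).comp Path.tendsto_range_infiniteConcatSegment
  have hg1 : e = g 1 := by
    refine hp.eq_of_specializes (specializes_iff_forall_open.2 fun W hW hgW => ?_) ?_
    · obtain ⟨n, hn⟩ := (hlim.eventually (eventually_smallSets_subset.2 (hW.mem_nhds hgW))).exists
      exact hn ⟨0, (β n).source⟩
    · simpa using (DFunLike.congr_fun hpg 1).symm
  rwa [← hg1] at hlim

end IsArcCovering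

theorem arcCovering_firstCountable_basisCondition_general {E B : Type*} [TopologicalSpace E]
    [TopologicalSpace B] [FirstCountableTopology B]
    (p : C(E, B)) (hp : IsArcCovering p) :
    HedgehogBasisCondition p := by
  intro e₀ U hU he₀
  by_contra! hescape
  obtain ⟨V, hV⟩ := (𝓝 (p e₀)).exists_antitone_basis
  choose y hyV hyU using fun n => not_subset.1 (hescape (V n) (hV.mem n))
  let β n : Path e₀ e₀ := (hyV n).somePath.trans (hyV n).somePath.symm
  have hβ : ∀ n, range (β n) = range (hyV n).somePath := fun n => by
    simp [β, Path.trans_range, Path.symm_range]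
  have hβV : ∀ n, p '' range (β n) ⊆ V n := fun n => by
    rw [hβ, image_subset_iff]
    exact range_subset_iff.2 (hyV n).somePath_mem
  obtain ⟨n, hn⟩ := ((hp.tendsto_smallSets_range (hV.tendsto_smallSets.smallSets_mono
    (.of_forall hβV))).eventually (eventually_smallSets_subset.2 (hU.mem_nhds he₀))).exists
  exact hyU n (hn (hβ n ▸ ⟨1, (hyV n).somePath.target⟩))

/-- an arc-covering over a first-countable base with Peano total space
satisfies the hedgehog basis condition, i.e. it is an arc-hedgehog covering. -/
theorem arcCovering_firstCountable_basisCondition {E B : Type*} [TopologicalSpace E]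
    [TopologicalSpace B] [FirstCountableTopology B]
    [ConnectedSpace E] [LocallyPathConnectedSpace E]
    (p : C(E, B)) (hp : IsArcCovering p) :
    HedgehogBasisCondition p :=
  arcCovering_firstCountable_basisCondition_general p hp
end

section
/- If p : E → B is an arc-hedgehog covering and E is a Peano space, then every fiber of p is a regular (T₃) zero-dimensional space: for each point x of a fiber F and each closed A ⊆ F with x ∉ A there is a subset of F that is open and closed in F, contains x, and misses A. -/
open unitInterval Topology

set_option linter.unnecessarySimpa false

universe u v w

/-!
Given `x ∉ A` in the fiber over `b₀`, the hedgehog basis condition yields a neighbourhood `V` of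
`b₀` such that the path component of `x` in `p ⁻¹' V` avoids `A`. Shrinking `V` to its interior
does not hurt, and since `E` is locally path-connected the path components of the open set
`p ⁻¹' interior V` are open; as they partition a set containing the whole fiber, their traces on
the fiber are clopen.
-/

namespace Wedge

variable {S A : Type*} {a₀ : A} [Preorder S] [IsDirected S (· ≤ ·)] [TopologicalSpace A]

def incl (s : S) : C(A, Wedge S A a₀) where
  toFun a := Quot.mk _ (s, a)
  continuous_toFun := continuous_def.mpr fun _ hU => hU.1 s

lemma incl_base (s s' : S) : incl (a₀ := a₀) s a₀ = incl s' a₀ :=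
  Quot.sound (Or.inr ⟨rfl, rfl⟩)

lemma exists_forall_incl_mem_of_isOpen {U : Set (Wedge S A a₀)} (hU : IsOpen U) {s : S}
    (hs : incl s a₀ ∈ U) : ∃ t : S, ∀ s' : S, t < s' → ∀ a : A, incl s' a ∈ U :=
  hU.2 ⟨s, hs⟩

variable {X : Type*} [TopologicalSpace X]

def desc (f : S → C(A, X)) (hbase : ∀ s s', f s a₀ = f s' a₀)
    (hconv : ∀ U : Set X, IsOpen U → ∀ s : S, f s a₀ ∈ U →
      ∃ t : S, ∀ s' : S, t < s' → ∀ a : A, f s' a ∈ U) :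
    C(Wedge S A a₀, X) where
  toFun := Quot.lift (fun x => f x.1 x.2) <| by
    rintro x y (rfl | ⟨hx, hy⟩)
    · rfl
    · simp only [hx, hy, hbase x.1 y.1]
  continuous_toFun := continuous_def.mpr fun U hU =>
    ⟨fun s => hU.preimage (f s).continuous, fun ⟨s, hs⟩ => hconv U hU s hs⟩

@[simp]
lemma desc_incl (f : S → C(A, X)) (hbase) (hconv) (s : S) (a : A) :
    desc (a₀ := a₀) f hbase hconv (incl s a) = f s a :=
  rfl

end Wedge

noncomputable def ArcHedgehog.punitHomeomorph : ArcHedgehog PUnit.{u + 1} ≃ₜ I where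
  toFun := ⇑(Wedge.desc (S := PUnit.{u + 1}) (a₀ := (0 : I)) (fun _ => ContinuousMap.id I)
    (fun _ _ => rfl) (fun _ _ _ _ => ⟨PUnit.unit, fun _ h => absurd h (lt_irrefl _)⟩) :
      C(ArcHedgehog PUnit.{u + 1}, I))
  invFun := ⇑(Wedge.incl (a₀ := (0 : I)) PUnit.unit : C(I, ArcHedgehog PUnit.{u + 1}))
  left_inv := by
    rintro ⟨⟨⟩, a⟩
    rfl
  right_inv _ := rfl
  continuous_toFun := ContinuousMap.continuous _
  continuous_invFun := ContinuousMap.continuous _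

lemma IsArcCovering.eq_of_comp_eq_s10 {E B : Type*} [TopologicalSpace E] [TopologicalSpace B]
    {p : C(E, B)} (hp : IsArcCovering p) {g h : C(I, E)} (hgh : p.comp g = p.comp h)
    (h0 : g 0 = h 0) : g = h :=
  (hp (g 0) (p.comp g) rfl).unique ⟨rfl, rfl⟩ ⟨hgh.symm, h0.symm⟩

/-- Neighbourhoods of `b` with a depth; the depth gives every index a strictly larger one. -/
structure NhdsIndex {B : Type u} [TopologicalSpace B] (b : B) : Type u where
  set : Set B
  mem_nhds : set ∈ 𝓝 b
  depth : ℕ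

namespace NhdsIndex

variable {B : Type u} [TopologicalSpace B] {b : B}

instance : Preorder (NhdsIndex b) where
  le s t := t.set ⊆ s.set ∧ s.depth ≤ t.depth
  le_refl _ := ⟨subset_rfl, le_rfl⟩
  le_trans _ _ _ hst htr := ⟨htr.1.trans hst.1, hst.2.trans htr.2⟩

instance : IsDirected (NhdsIndex b) (· ≤ ·) :=
  ⟨fun s t => ⟨⟨s.set ∩ t.set, Filter.inter_mem s.mem_nhds t.mem_nhds, max s.depth t.depth⟩,
    ⟨Set.inter_subset_left, le_max_left _ _⟩, ⟨Set.inter_subset_right, le_max_right _ _⟩⟩⟩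

def univ (b : B) : NhdsIndex b := ⟨Set.univ, Filter.univ_mem, 0⟩

def deepen (s : NhdsIndex b) : NhdsIndex b := ⟨s.set, s.mem_nhds, s.depth + 1⟩

lemma lt_deepen (s : NhdsIndex b) : s < s.deepen :=
  lt_of_le_not_ge ⟨subset_rfl, Nat.le_succ _⟩ fun h => Nat.not_succ_le_self _ h.2

end NhdsIndex

namespace IsArcHedgehogCovering

variable {E B : Type u} [TopologicalSpace E] [TopologicalSpace B] {p : C(E, B)}

lemma isArcCovering (hp : IsArcHedgehogCovering.{u} p) : IsArcCovering p := by
  intro e₀ f hf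
  let h := ArcHedgehog.punitHomeomorph.{u}
  obtain ⟨G, ⟨hGp, hG0⟩, hG⟩ := hp PUnit e₀ (f.comp h) (h.symm 0) (by simpa using hf)
  refine ⟨G.comp h.symm, ⟨?_, by simpa using hG0⟩, fun g ⟨hgp, hg0⟩ => ?_⟩
  · rw [← ContinuousMap.comp_assoc, hGp, ContinuousMap.comp_assoc]
    ext
    simp
  · have : g.comp h = G := hG _ ⟨by rw [← ContinuousMap.comp_assoc, hgp], by simpa using hg0⟩
    rw [← this, ContinuousMap.comp_assoc]
    ext
    simp

/-- If the path components of the preimages of neighbourhoods of `p e₀` all leave `U`, pick a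
path `γ V` in `p ⁻¹' V` from `e₀` to a point outside `U` for each `V`. The projections `p ∘ γ V`
glue to a map from an arc-hedgehog into `B`; its lift has the paths `γ V` as spines (unique path
lifting) and is continuous at the wedge point, so the spines eventually stay inside `U`. -/
lemma hedgehogBasisCondition (hp : IsArcHedgehogCovering.{u} p) : HedgehogBasisCondition p := by
  intro e₀ U hU he₀
  by_contra! hbad
  have hescape : ∀ s : NhdsIndex (p e₀), ∃ y ∉ U, JoinedIn (p ⁻¹' s.set) e₀ y := fun s =>
    let ⟨y, hyJ, hyU⟩ := Set.not_subset.mp (hbad s.set s.mem_nhds)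
    ⟨y, hyU, hyJ⟩
  choose y hyU γ hγ using hescape
  let f : C(ArcHedgehog (NhdsIndex (p e₀)), B) :=
    Wedge.desc (fun s => p.comp (γ s)) (fun _ _ => by simp)
      fun V hV s hs => ⟨⟨V, hV.mem_nhds (by simpa using hs), 0⟩, fun _ hs' _ => hs'.le.1 (hγ _ _)⟩
  obtain ⟨G, ⟨hGp, hG0⟩, -⟩ :=
    hp _ e₀ f (Wedge.incl (NhdsIndex.univ _) 0) ((Wedge.desc_incl _ _ _ _ _).trans (by simp))
  have hspine (s : NhdsIndex (p e₀)) : G.comp (Wedge.incl s) = γ s := by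
    refine hp.isArcCovering.eq_of_comp_eq_s10 (by ext t; exact congr($hGp (Wedge.incl s t))) ?_
    show G (Wedge.incl s 0) = γ s 0
    rw [(γ s).source, Wedge.incl_base s (NhdsIndex.univ _), hG0]
  obtain ⟨t, ht⟩ := Wedge.exists_forall_incl_mem_of_isOpen (hU.preimage G.continuous)
    (s := NhdsIndex.univ _) (show G _ ∈ U by rw [hG0]; exact he₀)
  have hmem : G.comp (Wedge.incl t.deepen) 1 ∈ U := ht _ t.lt_deepen 1
  rw [hspine] at hmem
  exact hyU _ (by simpa using hmem)

end IsArcHedgehogCovering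

lemma isClopen_preimage_val_pathComponentIn {X : Type*} [TopologicalSpace X]
    [LocallyPathConnectedSpace X] {O F : Set X} (hO : IsOpen O) (hF : F ⊆ O) (x : X) :
    IsClopen (((↑) : F → X) ⁻¹' pathComponentIn O x) := by
  refine ⟨isOpen_compl_iff.mp <| isOpen_iff_forall_mem_open.mpr fun z hz => ?_,
    (hO.pathComponentIn x).preimage continuous_subtype_val⟩
  refine ⟨((↑) : F → X) ⁻¹' pathComponentIn O z,
    fun w (hzw : JoinedIn O z w) (hxw : JoinedIn O x w) =>
    hz (hxw.trans hzw.symm), (hO.pathComponentIn z).preimage continuous_subtype_val,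
    mem_pathComponentIn_self (hF z.2)⟩

theorem fibers_regular_zero_dim_general {E B : Type u} [TopologicalSpace E] [TopologicalSpace B]
    [LocallyPathConnectedSpace E]
    (p : C(E, B)) (hp : IsArcHedgehogCovering.{u} p) :
    ∀ (b₀ : B) (x : ↥(p ⁻¹' {b₀})) (A : Set ↥(p ⁻¹' {b₀})), IsClosed A → x ∉ A →
      ∃ C : Set ↥(p ⁻¹' {b₀}), IsOpen C ∧ IsClosed C ∧ x ∈ C ∧ Disjoint C A := by
  intro b₀ x A hA hxA
  obtain ⟨U, hU, hUA⟩ := isOpen_induced_iff.mp hA.isOpen_compl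
  obtain ⟨V, hV, hVU⟩ :=
    hp.hedgehogBasisCondition x U hU (show x ∈ ((↑) ⁻¹' U : Set _) from hUA ▸ hxA)
  have hfiber : p ⁻¹' {b₀} ⊆ p ⁻¹' interior V := fun y hy => by
    rw [Set.mem_preimage, Set.mem_singleton_iff.mp hy, ← x.2]
    exact mem_interior_iff_mem_nhds.mpr hV
  have hclopen := isClopen_preimage_val_pathComponentIn
    (isOpen_interior.preimage p.continuous) hfiber x
  refine ⟨_, hclopen.isOpen, hclopen.isClosed, mem_pathComponentIn_self (hfiber x.2),
    Set.disjoint_left.mpr fun w hw => ?_⟩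
  have hwU : (w : E) ∈ U :=
    hVU (pathComponentIn_mono (Set.preimage_mono interior_subset) hw)
  exact (Set.ext_iff.mp hUA w).mp hwU

/-- fibers of an arc-hedgehog covering with Peano total space are
regular (`T₃`) zero-dimensional spaces. -/
theorem fibers_regular_zero_dim {E B : Type u} [TopologicalSpace E] [TopologicalSpace B]
    [ConnectedSpace E] [LocallyPathConnectedSpace E]
    (p : C(E, B)) (hp : IsArcHedgehogCovering.{u} p) :
    ∀ (b₀ : B) (x : ↥(p ⁻¹' {b₀})) (A : Set ↥(p ⁻¹' {b₀})), IsClosed A → x ∉ A →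
      ∃ C : Set ↥(p ⁻¹' {b₀}), IsOpen C ∧ IsClosed C ∧ x ∈ C ∧ Disjoint C A :=
  fibers_regular_zero_dim_general p hp
end

section
/- If p : E → B is an arc-hedgehog covering between Peano spaces and B is metrizable, then E is metrizable; a metric is given by d(x,y) = inf of r > 0 such that there is a path α from x to y in E with p(α([0,1])) contained in B(p(x),r) ∩ B(p(y),r). -/
open unitInterval Topology

set_option linter.unnecessarySimpa false

universe u v w

/-!
Paths concatenate, so a path from `x` to `y` within radius `r` and one from `y` to `z` within
radius `s` give a path from `x` to `z` within radius `r + s`: this is the triangle inequality.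
The balls of `d` are neighbourhoods in `E`: the path component of `x` in `p⁻¹ B(p x, ε / 3)` is
open by local path-connectedness and lies in the `d`-ball of radius `ε`. Conversely the basis
condition puts a `d`-ball inside every neighbourhood of `x`. Hence `d x y = 0` makes `x` and `y`
topologically indistinguishable, and unique lifting of the constant path forces `x = y`.
-/

open Metric Set

section PathDist

variable {E B : Type*} [TopologicalSpace E] [PseudoMetricSpace B]

def pathRadii (p : E → B) (x y : E) : Set ℝ :=
  {r : ℝ | 0 < r ∧ ∃ γ : Path x y, ∀ t : I, p (γ t) ∈ ball (p x) r ∩ ball (p y) r}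

noncomputable def pathDist (p : E → B) (x y : E) : ℝ := sInf (pathRadii p x y)

variable (p : E → B)

theorem bddBelow_pathRadii (x y : E) : BddBelow (pathRadii p x y) :=
  ⟨0, fun _ hr => hr.1.le⟩

theorem pathRadii_nonempty [PathConnectedSpace E] {p : E → B} (hp : Continuous p) (x y : E) :
    (pathRadii p x y).Nonempty := by
  let γ := PathConnectedSpace.somePath x y
  have hbdd : Bornology.IsBounded (range (p ∘ γ)) :=
    (isCompact_range (hp.comp γ.continuous)).isBounded
  obtain ⟨r, hrx⟩ := (isBounded_iff_subset_ball (p x)).1 hbdd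
  obtain ⟨s, hsy⟩ := (isBounded_iff_subset_ball (p y)).1 hbdd
  have hr : 0 < r := pos_of_mem_ball (hrx (mem_range_self 0))
  have hs : 0 < s := pos_of_mem_ball (hsy (mem_range_self 1))
  refine ⟨r + s, by positivity, γ, fun t => ⟨?_, ?_⟩⟩
  · exact ball_subset_ball (by linarith) (hrx ⟨t, rfl⟩)
  · exact ball_subset_ball (by linarith) (hsy ⟨t, rfl⟩)

theorem pathRadii_comm (x y : E) : pathRadii p x y = pathRadii p y x := by
  have key : ∀ x y, pathRadii p x y ⊆ pathRadii p y x := by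
    rintro x y r ⟨hr, γ, hγ⟩
    exact ⟨hr, γ.symm, fun t => (hγ _).symm⟩
  exact (key x y).antisymm (key y x)

theorem pathRadii_self (x : E) : pathRadii p x x = Ioi 0 := by
  ext r
  refine ⟨fun hr => hr.1, fun hr => ⟨hr, Path.refl x, fun t => ?_⟩⟩
  simpa using hr

theorem add_mem_pathRadii {x y z : E} {r s : ℝ} (hr : r ∈ pathRadii p x y)
    (hs : s ∈ pathRadii p y z) : r + s ∈ pathRadii p x z := by
  obtain ⟨hr, γ, hγ⟩ := hr
  obtain ⟨hs, δ, hδ⟩ := hs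
  have hxy : dist (p y) (p x) < r := by simpa using (hγ 1).1
  have hyz : dist (p y) (p z) < s := by simpa using (hδ 0).2
  refine ⟨by positivity, γ.trans δ, fun t => ?_⟩
  rw [Path.trans_apply]
  split_ifs
  · obtain ⟨h₁, h₂⟩ := hγ ⟨2 * t, _⟩
    rw [mem_ball] at h₁ h₂
    exact ⟨ball_subset_ball (by linarith) h₁,
      mem_ball.2 ((dist_triangle _ (p y) _).trans_lt (by linarith))⟩
  · obtain ⟨h₁, h₂⟩ := hδ ⟨2 * t - 1, _⟩
    rw [mem_ball] at h₁ h₂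
    exact ⟨mem_ball.2 ((dist_triangle _ (p y) _).trans_lt (by linarith)),
      ball_subset_ball (by linarith) h₂⟩

theorem pathDist_self (x : E) : pathDist p x x = 0 := by
  rw [pathDist, pathRadii_self, csInf_Ioi]

theorem pathDist_comm (x y : E) : pathDist p x y = pathDist p y x := by
  rw [pathDist, pathRadii_comm]; rfl

theorem pathDist_triangle [PathConnectedSpace E] {p : E → B} (hp : Continuous p) (x y z : E) :
    pathDist p x z ≤ pathDist p x y + pathDist p y z := by
  unfold pathDist
  rw [← csInf_add (pathRadii_nonempty hp x y) (bddBelow_pathRadii p x y)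
    (pathRadii_nonempty hp y z) (bddBelow_pathRadii p y z)]
  exact csInf_le_csInf (bddBelow_pathRadii p x z)
    ((pathRadii_nonempty hp x y).add (pathRadii_nonempty hp y z))
    (add_subset_iff.2 fun _ hr _ hs => add_mem_pathRadii p hr hs)

theorem joinedIn_of_pathDist_lt [PathConnectedSpace E] {p : E → B} (hp : Continuous p)
    {x y : E} {ε : ℝ} (h : pathDist p x y < ε) : JoinedIn (p ⁻¹' ball (p x) ε) x y := by
  obtain ⟨r, ⟨-, γ, hγ⟩, hrε⟩ := exists_lt_of_csInf_lt (pathRadii_nonempty hp x y) h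
  exact ⟨γ, fun t => ball_subset_ball hrε.le (hγ t).1⟩

theorem pathDist_le_of_joinedIn {x y : E} {ε : ℝ} (h : JoinedIn (p ⁻¹' ball (p x) ε) x y) :
    pathDist p x y ≤ 2 * ε := by
  obtain ⟨γ, hγ⟩ := h
  have hε : 0 < ε := pos_of_mem_ball (hγ 0)
  have hxy : dist (p y) (p x) < ε := by simpa using hγ 1
  refine csInf_le (bddBelow_pathRadii p x y) ⟨by positivity, γ, fun t => ⟨?_, ?_⟩⟩
  · exact ball_subset_ball (by linarith) (hγ t)
  · have := mem_ball.1 (hγ t)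
    exact mem_ball.2 ((dist_triangle_right _ _ _).trans_lt (by linarith))

theorem eventually_pathDist_lt [LocallyPathConnectedSpace E] {p : E → B} (hp : Continuous p)
    (x : E) {ε : ℝ} (hε : 0 < ε) : ∀ᶠ y in 𝓝 x, pathDist p x y < ε := by
  have hx : x ∈ p ⁻¹' ball (p x) (ε / 3) := mem_ball_self (by positivity)
  refine Filter.mem_of_superset
    (((isOpen_ball.preimage hp).pathComponentIn x).mem_nhds (mem_pathComponentIn_self hx))
    fun y hy => (pathDist_le_of_joinedIn p hy).trans_lt (by linarith)

end PathDist

namespace HedgehogBasisCondition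

variable {E B : Type*} [TopologicalSpace E] [PathConnectedSpace E] [PseudoMetricSpace B]
  {p : C(E, B)}

theorem exists_pathDist_lt_subset (hbasis : HedgehogBasisCondition p) {x : E} {s : Set E}
    (hs : s ∈ 𝓝 x) : ∃ ε > 0, ∀ y, pathDist p x y < ε → y ∈ s := by
  obtain ⟨U, hUs, hU, hxU⟩ := mem_nhds_iff.1 hs
  obtain ⟨V, hV, hVU⟩ := hbasis x U hU hxU
  obtain ⟨ε, hε, hεV⟩ := Metric.mem_nhds_iff.1 hV
  exact ⟨ε, hε, fun y hy =>
    hUs (hVU ((joinedIn_of_pathDist_lt p.continuous hy).mono (preimage_mono hεV)))⟩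

theorem inseparable_of_pathDist_eq_zero (hbasis : HedgehogBasisCondition p) {x y : E}
    (h : pathDist p x y = 0) : Inseparable x y := by
  have hmem : ∀ {x y : E}, pathDist p x y = 0 → ∀ U : Set E, IsOpen U → x ∈ U → y ∈ U :=
    fun h U hU hxU =>
      let ⟨_, hε, hεU⟩ := hbasis.exists_pathDist_lt_subset (hU.mem_nhds hxU)
      hεU _ (h ▸ hε)
  exact inseparable_iff_forall_isOpen.2 fun U hU =>
    ⟨hmem h U hU, hmem ((pathDist_comm p x y).symm.trans h) U hU⟩

end HedgehogBasisCondition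

/-- The jump path `t ↦ if t = 1 then y else x` between inseparable points is continuous and lifts
the constant path at `p x`, so unique path lifting forces `x = y`. -/
theorem IsArcCovering.t0Space {E B : Type*} [TopologicalSpace E] [TopologicalSpace B] [T0Space B]
    {p : C(E, B)} (hp : IsArcCovering p) : T0Space E := by
  refine ⟨fun x y hxy => ?_⟩
  have hpxy : p x = p y := (hxy.map p.continuous).eq
  have hjump : Continuous fun t : I => if t = 1 then y else x :=
    (continuous_congr_of_inseparable fun t => by split_ifs; exacts [hxy.symm, .rfl]).2
      continuous_const
  obtain ⟨g, -, huniq⟩ := hp x (.const I (p x)) rfl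
  have hjump_eq : (⟨_, hjump⟩ : C(I, E)) = g :=
    huniq _ ⟨by ext t; dsimp; split_ifs <;> simp [hpxy], by simp⟩
  have hconst_eq : ContinuousMap.const I x = g := huniq _ ⟨rfl, rfl⟩
  simpa using congr($(hjump_eq.trans hconst_eq.symm) 1).symm

theorem total_space_metrizable_general {E B : Type*} [tE : TopologicalSpace E] [MetricSpace B]
    [ConnectedSpace E] [LocallyPathConnectedSpace E]
    (p : C(E, B)) (hp : IsArcCovering p) (hbasis : HedgehogBasisCondition p) :
    ∃ m : MetricSpace E, m.toUniformSpace.toTopologicalSpace = tE ∧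
      ∀ x y : E, m.toDist.dist x y = sInf {r : ℝ | 0 < r ∧ ∃ γ : Path x y,
        ∀ t : I, p (γ t) ∈ Metric.ball (p x) r ∩ Metric.ball (p y) r} := by
  have : PathConnectedSpace E := pathConnectedSpace_iff_connectedSpace.2 ‹_›
  have : T0Space E := hp.t0Space
  have hopen : ∀ s : Set E, IsOpen s ↔ ∀ x ∈ s, ∃ ε > 0, ∀ y, pathDist p x y < ε → y ∈ s :=
    fun s => ⟨fun hs x hx => hbasis.exists_pathDist_lt_subset (hs.mem_nhds hx),
      fun hs => isOpen_iff_mem_nhds.2 fun x hx =>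
        let ⟨_, hε, hεs⟩ := hs x hx
        Filter.mem_of_superset (eventually_pathDist_lt p.continuous x hε) hεs⟩
  exact ⟨.ofDistTopology (pathDist p) (pathDist_self p) (pathDist_comm p)
    (pathDist_triangle p.continuous) hopen
    fun x y h => (hbasis.inseparable_of_pathDist_eq_zero h).eq, rfl, fun x y => rfl⟩

/-- the total space of an arc-hedgehog covering of Peano spaces over a
metrizable base is metrizable, with metric given by the infimum of radii `r` over
paths from `x` to `y` projecting into `B(p x, r) ∩ B(p y, r)`. -/
theorem total_space_metrizable {E B : Type*} [tE : TopologicalSpace E] [MetricSpace B]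
    [ConnectedSpace E] [LocallyPathConnectedSpace E] [ConnectedSpace B]
    [LocallyPathConnectedSpace B]
    (p : C(E, B)) (hp : IsArcCovering p) (hbasis : HedgehogBasisCondition p) :
    ∃ m : MetricSpace E, m.toUniformSpace.toTopologicalSpace = tE ∧
      ∀ x y : E, m.toDist.dist x y = sInf {r : ℝ | 0 < r ∧ ∃ γ : Path x y,
        ∀ t : I, p (γ t) ∈ Metric.ball (p x) r ∩ Metric.ball (p y) r} :=
  total_space_metrizable_general (tE := tE) p hp hbasis
end
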